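/- Let $n \geq 1$, $0 \leq a \leq n-1$, $b = n-a-1$, and $\alpha_{p,i}$ as above. Then for $2 \leq i \leq b+1$ we have $\prod_{i'=1}^{i-1}(q^{\alpha_{p,i'}} - q^{\alpha_{p,i}}) = q^{(i-1)(n-i)+i-1} \frac{q^{a+i-1}-1}{q^{i-1}-1} \prod_{h=1}^{i-1}(q^h - 1)$ in $\mathbb{Q}(q)$. -/

import Mathlib

/-!
Since `α i' - α i = i - i'` for `2 ≤ i' < i` and `α 1 - α i = a + i - 1`, factoring `q ^ α i` out
of each of the `i - 1` factors leaves `∏_{h=1}^{i-1} (q^h - 1)` (after reflecting `i' ↦ i - i'`)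
with its factor `q^{i-1} - 1` replaced by `q^{a+i-1} - 1`. The quotient on the right performs
exactly this swap, which is legitimate because `q^{i-1} - 1 ≠ 0` in `ℚ(q)`.
-/

open Finset

theorem RatFunc.X_pow_sub_one_ne_zero {K : Type*} [Field K] {m : ℕ} (hm : m ≠ 0) :
    (RatFunc.X : RatFunc K) ^ m - 1 ≠ 0 := by
  rw [← RatFunc.algebraMap_X, ← map_pow, ← map_one (algebraMap (Polynomial K) (RatFunc K)),
    ← map_sub, map_ne_zero_iff _ (RatFunc.algebraMap_injective K)]
  simpa using Polynomial.X_pow_sub_C_ne_zero (Nat.pos_of_ne_zero hm) (1 : K)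

theorem Finset.prod_zpow_sub_zpow {K ι : Type*} [Field K] {x : K} (hx : x ≠ 0) (s : Finset ι)
    (f : ι → ℤ) (c : ℤ) :
    ∏ j ∈ s, (x ^ f j - x ^ c) = x ^ (c * #s) * ∏ j ∈ s, (x ^ (f j - c) - 1) := by
  rw [zpow_mul, zpow_natCast, ← prod_const, ← prod_mul_distrib]
  refine prod_congr rfl fun j _ => ?_
  rw [mul_sub, mul_one, ← zpow_add₀ hx, add_sub_cancel]

theorem Finset.prod_Icc_reflect_int {M : Type*} [CommMonoid M] (f : ℤ → M) (m : ℕ) :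
    ∏ j ∈ Icc 1 m, f (m + 1 - j) = ∏ h ∈ Icc (1 : ℤ) m, f h := by
  refine prod_nbij' (fun j => m + 1 - j) (fun h => (m + 1 - h).toNat) ?_ ?_ ?_ ?_
    (fun _ _ => rfl) <;>
    simp only [mem_Icc] <;> intro j hj <;> omega

theorem stmt_4_general (n a b i : ℕ)
    (hi1 : 2 ≤ i) (hi2 : i ≤ b + 1)
    (α : ℕ → ℤ)
    (hα1 : α 1 = (a : ℤ) + n)
    (hα2 : ∀ k, 2 ≤ k → k ≤ b + 1 → α k = (n : ℤ) - k + 1) :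
    ∏ i' ∈ Icc 1 (i - 1), ((RatFunc.X : RatFunc ℚ) ^ (α i')
        - (RatFunc.X : RatFunc ℚ) ^ (α i))
      = (RatFunc.X : RatFunc ℚ) ^ (((i : ℤ) - 1) * ((n : ℤ) - i) + ((i : ℤ) - 1))
        * (((RatFunc.X : RatFunc ℚ) ^ ((a : ℤ) + i - 1) - 1)
            / ((RatFunc.X : RatFunc ℚ) ^ ((i : ℤ) - 1) - 1))
        * ∏ h ∈ Icc (1 : ℤ) ((i : ℤ) - 1), ((RatFunc.X : RatFunc ℚ) ^ h - 1) := by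
  obtain ⟨m, rfl⟩ : ∃ m, i = m + 1 := ⟨i - 1, by omega⟩
  set X : RatFunc ℚ := RatFunc.X
  have hαi : α (m + 1) = n - (m + 1 : ℕ) + 1 := hα2 _ hi1 hi2
  have hmem : 1 ∈ Icc 1 m := mem_Icc.2 ⟨le_rfl, by omega⟩
  have hdiff : ∀ j ∈ (Icc 1 m).erase 1, α j - α (m + 1) = m + 1 - j := by
    intro j hj
    obtain ⟨hj1, hj⟩ := mem_erase.1 hj
    rw [mem_Icc] at hj
    rw [hα2 j (by omega) (by omega), hαi]
    push_cast
    ring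
  have hlhs : ∏ j ∈ Icc 1 m, (X ^ α j - X ^ α (m + 1)) = X ^ (α (m + 1) * m) *
      ((X ^ ((a : ℤ) + m) - 1) * ∏ j ∈ (Icc 1 m).erase 1, (X ^ ((m : ℤ) + 1 - j) - 1)) := by
    rw [prod_zpow_sub_zpow RatFunc.X_ne_zero, Nat.card_Icc, Nat.add_sub_cancel,
      ← mul_prod_erase _ _ hmem, prod_congr rfl fun j hj => by rw [hdiff j hj], hα1, hαi]
    congr 4
    push_cast
    ring
  have hrhs : ∏ h ∈ Icc (1 : ℤ) m, (X ^ h - 1) =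
      (X ^ (m : ℤ) - 1) * ∏ j ∈ (Icc 1 m).erase 1, (X ^ ((m : ℤ) + 1 - j) - 1) := by
    rw [← prod_Icc_reflect_int, ← mul_prod_erase _ _ hmem, Nat.cast_one, add_sub_cancel_right]
  have hD : X ^ (m : ℤ) - 1 ≠ 0 := by
    simpa using RatFunc.X_pow_sub_one_ne_zero (K := ℚ) (by omega : m ≠ 0)
  have hexp : α (m + 1) * m = ((m + 1 : ℕ) - 1) * (n - (m + 1 : ℕ)) + ((m + 1 : ℕ) - 1) := by
    rw [hαi]
    push_cast
    ring
  rw [Nat.add_sub_cancel, hlhs, hexp, show ((m + 1 : ℕ) : ℤ) - 1 = m by push_cast; ring, hrhs,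
    show (a : ℤ) + (m + 1 : ℕ) - 1 = a + m by push_cast; ring]
  field_simp

/-- Same setting as Statement 2, for `2 ≤ i ≤ b+1`:
`∏_{i'=1}^{i-1} (q^{α_{p,i'}} - q^{α_{p,i}})
  = q^{(i-1)(n-i)+i-1} (q^{a+i-1}-1)/(q^{i-1}-1) ∏_{h=1}^{i-1}(q^h - 1)` in `ℚ(q)`. -/
theorem stmt_4 (n a b i : ℕ) (hn : 1 ≤ n) (hab : a + b + 1 = n)
    (hi1 : 2 ≤ i) (hi2 : i ≤ b + 1)
    (α : ℕ → ℤ)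
    (hα1 : α 1 = (a : ℤ) + n)
    (hα2 : ∀ k, 2 ≤ k → k ≤ b + 1 → α k = (n : ℤ) - k + 1)
    (hα3 : ∀ k, b + 2 ≤ k → k ≤ n → α k = (n : ℤ) - k) :
    ∏ i' ∈ Icc 1 (i - 1), ((RatFunc.X : RatFunc ℚ) ^ (α i')
        - (RatFunc.X : RatFunc ℚ) ^ (α i))
      = (RatFunc.X : RatFunc ℚ) ^ (((i : ℤ) - 1) * ((n : ℤ) - i) + ((i : ℤ) - 1))
        * (((RatFunc.X : RatFunc ℚ) ^ ((a : ℤ) + i - 1) - 1)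
            / ((RatFunc.X : RatFunc ℚ) ^ ((i : ℤ) - 1) - 1))
        * ∏ h ∈ Icc (1 : ℤ) ((i : ℤ) - 1), ((RatFunc.X : RatFunc ℚ) ^ h - 1) :=
  stmt_4_general n a b i hi1 hi2 α hα1 hα2
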